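/- With G = (V, E_A ∪ E_B), G_A = (V, E_A), G_B = (V, E_B), and HSTAB(G) = STAB(G_A) ⊙ QSTAB(G_B), one has the sandwich inclusions STAB(G) ⊆ HSTAB(G) ⊆ QSTAB(G). -/

import Mathlib

open Finset

variable {V : Type} [Fintype V] [DecidableEq V]

/-- The characteristic (0/1) vector of a set of vertices. -/
noncomputable def charVec (S : Set V) : V → ℝ := S.indicator 1

/-- A stable (independent) set: no two of its elements are adjacent. -/
def IsStable (G : SimpleGraph V) (S : Set V) : Prop :=
  ∀ ⦃u⦄, u ∈ S → ∀ ⦃v⦄, v ∈ S → ¬ G.Adj u v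

/-- The stable set polytope: convex hull of characteristic vectors of stable sets. -/
noncomputable def STAB (G : SimpleGraph V) : Set (V → ℝ) :=
  convexHull ℝ {x | ∃ S : Set V, IsStable G S ∧ x = charVec S}

/-- The clique-constrained (fractional stable set) polytope. -/
def QSTAB (G : SimpleGraph V) : Set (V → ℝ) :=
  {x | (∀ v, 0 ≤ x v) ∧ ∀ Q : Finset V, G.IsClique (↑Q : Set V) → ∑ v ∈ Q, x v ≤ 1}

/-- The hybrid set `HSTAB(G) = STAB(G_A) ⊙ QSTAB(G_B)`: convex hull of Hadamard
products of vertices (extreme points) of the two polytopes; the vertices of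
`STAB(G_A)` are exactly the characteristic vectors of stable sets of `G_A`. -/
noncomputable def HSTAB (GA GB : SimpleGraph V) : Set (V → ℝ) :=
  convexHull ℝ {z | ∃ S : Set V, IsStable GA S ∧
    ∃ ω ∈ (QSTAB GB).extremePoints ℝ, z = charVec S * ω}

/-- Maximum (supremum) of the linear functional `x ↦ w · x` over a set. -/
noncomputable def maxW (P : Set (V → ℝ)) (w : V → ℝ) : ℝ :=
  sSup ((fun x => ∑ v, w v * x v) '' P)

/-!
A stable set `S` of `G_A ⊔ G_B` is stable in both graphs, and its `0/1` vector is a vertex of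
`QSTAB(G_B)`, being a vertex of the unit cube that lies in `QSTAB(G_B)`; hence
`1_S = 1_S ⊙ 1_S` is a generator of `HSTAB`. Conversely, if `S` is stable in `G_A`, a clique of
`G_A ⊔ G_B` meets `S` in a clique of `G_B`, so for `ω ∈ QSTAB(G_B)` the vector `1_S ⊙ ω`
satisfies every clique inequality of `G_A ⊔ G_B`; as `QSTAB` is convex, so does all of `HSTAB`.
-/

section

variable {α : Type} {G H : SimpleGraph α} {S : Set α}

theorem charVec_mul (S : Set α) (x : α → ℝ) : charVec S * x = S.indicator x := by
  ext v
  by_cases hv : v ∈ S <;> simp [charVec, hv]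

theorem charVec_mul_self (S : Set α) : charVec S * charVec S = charVec S := by
  rw [charVec_mul, charVec, Set.indicator_indicator, Set.inter_self]

theorem IsStable.anti (hGH : G ≤ H) (hS : IsStable H S) : IsStable G S :=
  fun _ hu _ hv huv => hS hu hv (hGH huv)

theorem IsStable.isClique_inter_of_sup (hS : IsStable G S) {Q : Set α}
    (hQ : (G ⊔ H).IsClique Q) : H.IsClique (Q ∩ S) := by
  intro u hu v hv huv
  exact (hQ hu.1 hv.1 huv).resolve_left (hS hu.2 hv.2)

theorem convex_QSTAB : Convex ℝ (QSTAB G) := by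
  rintro x ⟨hx, hxQ⟩ y ⟨hy, hyQ⟩ a b ha hb hab
  refine ⟨fun v => add_nonneg (mul_nonneg ha (hx v)) (mul_nonneg hb (hy v)), fun Q hQ => ?_⟩
  calc ∑ v ∈ Q, (a • x + b • y) v = a * ∑ v ∈ Q, x v + b * ∑ v ∈ Q, y v := by
        simp only [Pi.add_apply, Pi.smul_apply, smul_eq_mul, sum_add_distrib, mul_sum]
    _ ≤ a * 1 + b * 1 := by gcongr <;> simp_all
    _ = 1 := by rw [mul_one, mul_one, hab]

theorem QSTAB_subset_pi_Icc : QSTAB G ⊆ Set.univ.pi fun _ => Set.Icc 0 1 := by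
  intro x hx v _
  refine ⟨hx.1 v, ?_⟩
  simpa using hx.2 {v} (by simp)

theorem one_mem_QSTAB_bot : (1 : α → ℝ) ∈ QSTAB ⊥ := by
  refine ⟨fun _ => zero_le_one, fun Q hQ => ?_⟩
  rw [SimpleGraph.isClique_bot_iff] at hQ
  simpa using card_le_one_iff_subsingleton.mpr hQ

theorem indicator_mem_QSTAB_sup (hS : IsStable G S) {x : α → ℝ} (hx : x ∈ QSTAB H) :
    S.indicator x ∈ QSTAB (G ⊔ H) := by
  classical
  refine ⟨fun v => Set.indicator_nonneg (fun v _ => hx.1 v) v, fun Q hQ => ?_⟩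
  rw [sum_indicator_eq_sum_filter]
  exact hx.2 _ (by rw [coe_filter]; exact hS.isClique_inter_of_sup hQ)

theorem charVec_mem_QSTAB (hS : IsStable G S) : charVec S ∈ QSTAB G := by
  have h := indicator_mem_QSTAB_sup (H := ⊥) hS one_mem_QSTAB_bot
  rw [sup_bot_eq] at h
  exact h

theorem charVec_mem_extremePoints_QSTAB (hS : IsStable G S) :
    charVec S ∈ (QSTAB G).extremePoints ℝ := by
  refine inter_extremePoints_subset_extremePoints_of_subset QSTAB_subset_pi_Icc
    ⟨charVec_mem_QSTAB hS, ?_⟩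
  rw [extremePoints_pi]
  intro v _
  rw [Set.extremePoints_Icc zero_le_one]
  by_cases hv : v ∈ S <;> simp [charVec, hv]

end

/-- The sandwich inclusions
`STAB(G) ⊆ HSTAB(G) ⊆ QSTAB(G)` for `G = (V, E_A ∪ E_B)` and
`HSTAB(G) = STAB(G_A) ⊙ QSTAB(G_B)`. -/
theorem HSTAB_sandwich (GA GB : SimpleGraph V) :
    STAB (GA ⊔ GB) ⊆ HSTAB GA GB ∧ HSTAB GA GB ⊆ QSTAB (GA ⊔ GB) := by
  constructor
  · refine convexHull_mono ?_
    rintro _ ⟨S, hS, rfl⟩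
    exact ⟨S, hS.anti le_sup_left, charVec S,
      charVec_mem_extremePoints_QSTAB (hS.anti le_sup_right), (charVec_mul_self S).symm⟩
  · refine convexHull_min ?_ convex_QSTAB
    rintro _ ⟨S, hS, ω, hω, rfl⟩
    rw [charVec_mul]
    exact indicator_mem_QSTAB_sup hS hω.1
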